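/- Let (ξ_n)_{n≥1} be i.i.d. fair coin tosses with values in {H,T}, Pr(ξ=H)=Pr(ξ=T)=1/2, and let B_1 = THH, B_2 = HTH, B_3 = HHT. Suppose the initial pattern A = H is given (so ξ_0 = H and the observed sequence is ξ_0, ξ_1, ξ_2, …). Let τ_i = min{k ≥ 0 : B_i is a contiguous subpattern of ξ_0ξ_1…ξ_k} and τ = min(τ_1, τ_2, τ_3). Then Pr(τ = τ_1) = 1/6, Pr(τ = τ_2) = 1/3, and Pr(τ = τ_3) = 1/2. -/

import Mathlib

open MeasureTheory ProbabilityTheory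

/-- The two-letter alphabet of coin outcomes: heads `H` and tails `T`. -/
inductive Coin : Type
  | H : Coin
  | T : Coin
  deriving DecidableEq

instance : Fintype Coin := ⟨{Coin.H, Coin.T}, fun x => by cases x <;> simp⟩

instance : MeasurableSpace Coin := ⊤

/-- The word `a₁…a_{l-1}ξ₀ξ₁…ξ_k = A ++ ξ₁…ξ_k` observed at time `k`, given the initial
pattern `A` (with `ξ₀ = a_l` the last letter of `A`; here `ξ i` denotes the `(i+1)`-st
toss after the initial pattern). -/
def obsWord {Ω : Type*} (A : List Coin) (ξ : ℕ → Ω → Coin) (k : ℕ) (ω : Ω) : List Coin :=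
  A ++ List.ofFn fun i : Fin k => ξ i ω

/-- The first `k ≥ 0` such that the pattern `Bp` occurs as a contiguous subpattern of
`a₁…a_{l-1}ξ₀ξ₁…ξ_k`. -/
noncomputable def hitTime {Ω : Type*} (A Bp : List Coin) (ξ : ℕ → Ω → Coin) (ω : Ω) : ℕ :=
  sInf {k : ℕ | Bp <:+: obsWord A ξ k ω}

/-!
Run the race between the three patterns as a finite automaton whose state is either the pattern
that appeared first or, while none has appeared, the last two letters. For each pattern `B` the
probability that `B` wins from a given state solves the first-step equations; scaled by `6` these
values are natural numbers, and harmonicity says that averaging them over the `2 ^ k` continuations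
of length `k` does not change them. Hence the probability that `B` has won by time `k` is at most
its value `1/6`, `1/3`, `1/2` at the initial state `H`, for every `k`. Since every pattern occurs
almost surely, `τ = τᵢ` forces `Bᵢ` to win at some finite time, so `Pr(τ = τᵢ)` obeys the same
bounds; the three events cover the sample space and the bounds add up to `1`, so they are equalities.
-/

open scoped ENNReal NNReal

namespace List

variable {α : Type*}

theorem rtake_rtake_of_le {l : List α} {m k : ℕ} (h : k ≤ m) :
    (l.rtake m).rtake k = l.rtake k := by
  simp [rtake_eq_reverse_take_reverse, take_take, min_eq_left h]

theorem rtake_suffix (l : List α) (n : ℕ) : l.rtake n <:+ l := drop_suffix _ _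

end List

theorem ENNReal.eq_of_le_of_add_add_le {a b c x y z : ℝ≥0∞} (ha : a ≤ x) (hb : b ≤ y)
    (hc : c ≤ z) (h : x + y + z ≤ a + b + c) (hfin : x + y + z ≠ ∞) :
    a = x ∧ b = y ∧ c = z := by
  obtain ⟨⟨hx, hy⟩, hz⟩ : (x ≠ ∞ ∧ y ≠ ∞) ∧ z ≠ ∞ := by simpa [ENNReal.add_ne_top] using hfin
  lift x to ℝ≥0 using hx
  lift y to ℝ≥0 using hy
  lift z to ℝ≥0 using hz
  lift a to ℝ≥0 using ne_top_of_le_ne_top ENNReal.coe_ne_top ha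
  lift b to ℝ≥0 using ne_top_of_le_ne_top ENNReal.coe_ne_top hb
  lift c to ℝ≥0 using ne_top_of_le_ne_top ENNReal.coe_ne_top hc
  norm_cast at *
  rw [← NNReal.coe_le_coe] at ha hb hc h
  push_cast at h
  refine ⟨?_, ?_, ?_⟩ <;> apply le_antisymm <;>
    first | assumption | (rw [← NNReal.coe_le_coe]; linarith)

theorem sum_foldl_ofFn_le {α σ : Type*} [Fintype α] {step : σ → α → σ} {g : σ → ℕ} {R : Set σ}
    (hR : ∀ s ∈ R, ∀ a, step s a ∈ R)
    (hg : ∀ s ∈ R, ∑ a, g (step s a) ≤ Fintype.card α * g s) (k : ℕ) {s : σ} (hs : s ∈ R) :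
    ∑ w : Fin k → α, g ((List.ofFn w).foldl step s) ≤ Fintype.card α ^ k * g s := by
  induction k generalizing s with
  | zero => simp
  | succ k ih =>
    calc ∑ w : Fin (k + 1) → α, g ((List.ofFn w).foldl step s)
        = ∑ a, ∑ w : Fin k → α, g ((List.ofFn w).foldl step (step s a)) := by
          rw [← Fintype.sum_prod_type', ← (Fin.consEquiv fun _ => α).sum_comp]
          simp [List.ofFn_succ]
      _ ≤ ∑ a, Fintype.card α ^ k * g (step s a) := Finset.sum_le_sum fun a _ => ih (hR s hs a)
      _ ≤ Fintype.card α ^ (k + 1) * g s := by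
          rw [← Finset.mul_sum, pow_succ, mul_assoc]
          exact Nat.mul_le_mul_left _ (hg s hs)

theorem measure_tosses_mem_le {Ω α : Type*} [MeasurableSpace Ω] {μ : Measure Ω} [Fintype α]
    [MeasurableSpace α] [MeasurableSingletonClass α] {ξ : ℕ → Ω → α} (hindep : iIndepFun ξ μ)
    (hdist : ∀ n a, μ {ω | ξ n ω = a} = (Fintype.card α : ℝ≥0∞)⁻¹) (k : ℕ)
    (S : Finset (Fin k → α)) :
    μ {ω | (fun i : Fin k => ξ i ω) ∈ S} ≤ S.card / Fintype.card α ^ k := by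
  have hcylinder (w : Fin k → α) :
      μ {ω | (fun i : Fin k => ξ i ω) = w} = (Fintype.card α ^ k : ℝ≥0∞)⁻¹ := by
    have := (hindep.precomp Fin.val_injective).measure_inter_preimage_eq_mul Finset.univ
      (sets := fun i => {w i}) (fun i _ => MeasurableSet.singleton _)
    simp only [Finset.mem_univ, Set.iInter_true] at this
    convert this using 1
    · congr 1; ext ω; simp [funext_iff]
    · simp [Set.preimage, hdist, ENNReal.inv_pow]
  calc μ {ω | (fun i : Fin k => ξ i ω) ∈ S}
      = μ (⋃ w ∈ S, {ω | (fun i : Fin k => ξ i ω) = w}) := by congr 1; ext ω; simp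
    _ ≤ ∑ w ∈ S, μ {ω | (fun i : Fin k => ξ i ω) = w} := measure_biUnion_finset_le _ _
    _ = S.card / Fintype.card α ^ k := by simp [hcylinder, div_eq_mul_inv]

section PatternRace

variable {α : Type*} [DecidableEq α]

/-- The race between the patterns `Bs`, all of length `n + 1`: the state `.inl B` records that `B`
appeared first, `.inr t` that no pattern has appeared yet and `t` holds the last `n` letters. -/
def raceStep (Bs : List (List α)) (n : ℕ) : List α ⊕ List α → α → List α ⊕ List α
  | .inl B, _ => .inl B
  | .inr t, a => if t ++ [a] ∈ Bs then .inl (t ++ [a]) else .inr ((t ++ [a]).rtake n)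

variable {Bs : List (List α)} {n : ℕ}

theorem foldl_raceStep_inl (B u : List α) : u.foldl (raceStep Bs n) (.inl B) = .inl B := by
  induction u with
  | nil => rfl
  | cons _ _ ih => exact ih

theorem foldl_raceStep_eq_inr {u : List α} (hu : ∀ B ∈ Bs, ¬ B <:+: u) :
    u.foldl (raceStep Bs n) (.inr []) = .inr (u.rtake n) := by
  induction u using List.reverseRecOn with
  | nil => simp
  | append_singleton u a ih =>
    have hu' : ∀ B ∈ Bs, ¬ B <:+: u :=
      fun B hB h => hu B hB (h.trans (List.infix_append [] u [a]))
    have hnot : (u ++ [a]).rtake (n + 1) ∉ Bs := fun h => hu _ h (List.rtake_suffix _ _).isInfix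
    rw [List.rtake_concat_succ] at hnot
    rw [List.foldl_append, ih hu', List.foldl_cons, List.foldl_nil, raceStep, if_neg hnot,
      ← List.rtake_concat_succ, List.rtake_rtake_of_le (Nat.le_succ n)]

theorem foldl_raceStep_concat_eq_inl (hBs : ∀ B ∈ Bs, B.length = n + 1) {u B : List α} {a : α}
    (hu : ∀ B ∈ Bs, ¬ B <:+: u) (hB : B ∈ Bs) (hBu : B <:+: u ++ [a]) :
    (u ++ [a]).foldl (raceStep Bs n) (.inr []) = .inl B := by
  have hsuffix : B <:+ u ++ [a] := (List.infix_concat_iff.1 hBu).resolve_right (hu B hB)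
  have hrtake : B = u.rtake n ++ [a] := by
    rw [← List.rtake_concat_succ, ← hBs B hB]
    exact List.suffix_iff_eq_drop.1 hsuffix
  rw [List.foldl_append, foldl_raceStep_eq_inr hu]
  simp [raceStep, ← hrtake, hB]

end PatternRace

section HittingTimes

variable {Ω : Type*} {A : List Coin} {ξ : ℕ → Ω → Coin} {ω : Ω}

theorem obsWord_zero : obsWord A ξ 0 ω = A := by simp [obsWord]

theorem obsWord_succ (k : ℕ) : obsWord A ξ (k + 1) ω = obsWord A ξ k ω ++ [ξ k ω] := by
  rw [obsWord, obsWord, List.ofFn_succ', List.concat_eq_append, List.append_assoc]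
  rfl

instance : DiscreteMeasurableSpace Coin := ⟨fun _ => MeasurableSpace.measurableSet_top⟩

theorem measurableSet_setOf_obsWord [MeasurableSpace Ω] (hmeas : ∀ n, Measurable (ξ n))
    (P : List Coin → Prop) (k : ℕ) : MeasurableSet {ω | P (obsWord A ξ k ω)} :=
  measurable_pi_lambda (fun ω (i : Fin k) => ξ i ω) (fun i => hmeas i)
    (Set.toFinite {w : Fin k → Coin | P (A ++ List.ofFn w)}).measurableSet

variable {Bs : List (List Coin)} {n : ℕ}

theorem monotone_setOf_foldl_obsWord_eq_inl (B : List Coin) :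
    Monotone fun k => {ω | (obsWord A ξ k ω).foldl (raceStep Bs n) (.inr []) = .inl B} := by
  refine monotone_nat_of_le_succ fun k ω hω => ?_
  simp only [Set.mem_ofPred_eq] at hω ⊢
  rw [obsWord_succ, List.foldl_append, hω, foldl_raceStep_inl]

theorem exists_foldl_obsWord_eq_inl (hBs : ∀ B ∈ Bs, B.length = n + 1)
    (hA : ∀ B ∈ Bs, ¬ B <:+: A) {B : List Coin} (hB : B ∈ Bs)
    (hhit : ∀ B' ∈ Bs, ∃ k, B' <:+: obsWord A ξ k ω)
    (hfirst : ∀ B' ∈ Bs, hitTime A B ξ ω ≤ hitTime A B' ξ ω) :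
    ∃ k, (obsWord A ξ k ω).foldl (raceStep Bs n) (.inr []) = .inl B := by
  have hmem : B <:+: obsWord A ξ (hitTime A B ξ ω) ω := Nat.sInf_mem (hhit B hB)
  obtain ⟨m, hm⟩ : ∃ m, hitTime A B ξ ω = m + 1 :=
    Nat.exists_eq_succ_of_ne_zero fun h0 => hA B hB (by rwa [h0, obsWord_zero] at hmem)
  have hbefore : ∀ B' ∈ Bs, ¬ B' <:+: obsWord A ξ m ω := fun B' hB' =>
    Nat.notMem_of_lt_sInf (lt_of_lt_of_le (by omega) (hfirst B' hB'))
  refine ⟨m + 1, ?_⟩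
  rw [hm, obsWord_succ] at hmem
  rw [obsWord_succ]
  exact foldl_raceStep_concat_eq_inl hBs hbefore hB hmem

theorem measure_first_le_iSup [MeasurableSpace Ω] {μ : Measure Ω} [IsProbabilityMeasure μ]
    (hmeas : ∀ n, Measurable (ξ n)) (hBs : ∀ B ∈ Bs, B.length = n + 1)
    (hA : ∀ B ∈ Bs, ¬ B <:+: A) {B : List Coin} (hB : B ∈ Bs)
    (hfin : μ {ω | ∀ B' ∈ Bs, ∃ k, B' <:+: obsWord A ξ k ω} = 1) :
    μ {ω | ∀ B' ∈ Bs, hitTime A B ξ ω ≤ hitTime A B' ξ ω} ≤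
      ⨆ k, μ {ω | (obsWord A ξ k ω).foldl (raceStep Bs n) (.inr []) = .inl B} := by
  set F := {ω | ∀ B' ∈ Bs, ∃ k, B' <:+: obsWord A ξ k ω}
  have hF : MeasurableSet F := by
    simp only [F, Set.ofPred_forall, Set.ofPred_exists]
    exact .iInter fun B' => .iInter fun _ => .iUnion fun k =>
      measurableSet_setOf_obsWord hmeas _ k
  have hFc : μ Fᶜ = 0 := (prob_compl_eq_zero_iff hF).2 hfin
  calc μ {ω | ∀ B' ∈ Bs, hitTime A B ξ ω ≤ hitTime A B' ξ ω}
      ≤ μ (Fᶜ ∪ ⋃ k, {ω | (obsWord A ξ k ω).foldl (raceStep Bs n) (.inr []) = .inl B}) := by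
        refine measure_mono fun ω hfirst => ?_
        by_cases hω : ω ∈ F
        · exact .inr (Set.mem_iUnion.2 (exists_foldl_obsWord_eq_inl hBs hA hB hω hfirst))
        · exact .inl hω
    _ ≤ μ Fᶜ + μ (⋃ k, {ω | (obsWord A ξ k ω).foldl (raceStep Bs n) (.inr []) = .inl B}) :=
        measure_union_le _ _
    _ = ⨆ k, μ {ω | (obsWord A ξ k ω).foldl (raceStep Bs n) (.inr []) = .inl B} := by
        rw [hFc, zero_add, (monotone_setOf_foldl_obsWord_eq_inl B).measure_iUnion]

end HittingTimes

namespace Coin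

def patterns : List (List Coin) := [[T, H, H], [H, T, H], [H, H, T]]

/-- `winChance B t` is `6` times the probability that `B` wins the race from the state `.inr t`:
the solution of the first-step equations on the states reachable from `.inr [H]`. -/
def winChance : List Coin → List Coin → ℕ
  | [T, H, H], [H] => 1
  | [T, H, H], [H, T] => 2
  | [T, H, H], [T, H] => 4
  | [T, H, H], [T, T] => 4
  | [H, T, H], [H] => 2
  | [H, T, H], [H, T] => 4
  | [H, T, H], [T, H] => 2
  | [H, T, H], [T, T] => 2
  | [H, H, T], [H] => 3
  | [H, H, T], [H, H] => 6
  | _, _ => 0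

def raceValue (B : List Coin) : List Coin ⊕ List Coin → ℕ
  | .inl B' => if B' = B then 6 else 0
  | .inr t => winChance B t

def reachable : Set (List Coin ⊕ List Coin) :=
  {s | ∀ t, s = .inr t → t ∈ [[H], [H, H], [H, T], [T, H], [T, T]]}

theorem raceStep_mem_reachable : ∀ s ∈ reachable, ∀ c, raceStep patterns 2 s c ∈ reachable := by
  rintro (B | t) hs c
  · simp [raceStep, reachable]
  · have ht := hs t rfl
    simp only [List.mem_cons, List.not_mem_nil, or_false] at ht
    rcases ht with rfl | rfl | rfl | rfl | rfl <;> cases c <;>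
      simp [raceStep, reachable, patterns] <;> decide

theorem sum_raceValue_raceStep {B : List Coin} (hB : B ∈ patterns) :
    ∀ s ∈ reachable,
      ∑ c, raceValue B (raceStep patterns 2 s c) = Fintype.card Coin * raceValue B s := by
  rintro (B' | t) hs
  · simp [raceStep]
  · have ht := hs t rfl
    simp only [patterns, List.mem_cons, List.not_mem_nil, or_false] at ht hB
    rcases hB with rfl | rfl | rfl <;> rcases ht with rfl | rfl | rfl | rfl | rfl <;> decide

theorem card_filter_foldl_raceStep_eq_inl_mul_six_le {B : List Coin} (hB : B ∈ patterns) (k : ℕ) :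
    (Finset.univ.filter fun w : Fin k → Coin =>
      (List.ofFn w).foldl (raceStep patterns 2) (.inr [H]) = .inl B).card * 6 ≤
        2 ^ k * winChance B [H] :=
  calc _ = ∑ w ∈ Finset.univ.filter (fun w : Fin k → Coin =>
          (List.ofFn w).foldl (raceStep patterns 2) (.inr [H]) = .inl B),
            raceValue B ((List.ofFn w).foldl (raceStep patterns 2) (.inr [H])) := by
        rw [Finset.card_eq_sum_ones, Finset.sum_mul]
        refine Finset.sum_congr rfl fun w hw => ?_
        simp [(Finset.mem_filter.1 hw).2, raceValue]
    _ ≤ ∑ w, raceValue B ((List.ofFn w).foldl (raceStep patterns 2) (.inr [H])) :=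
        Finset.sum_le_sum_of_subset (Finset.filter_subset _ _)
    _ ≤ 2 ^ k * winChance B [H] :=
        sum_foldl_ofFn_le raceStep_mem_reachable
          (fun s hs => (sum_raceValue_raceStep hB s hs).le) k (by simp [reachable])

variable {Ω : Type*} [MeasurableSpace Ω] {μ : Measure Ω} {ξ : ℕ → Ω → Coin}

theorem measure_foldl_obsWord_eq_inl_le (hindep : iIndepFun ξ μ)
    (hdist : ∀ n c, μ {ω | ξ n ω = c} = 1 / 2) {B : List Coin} (hB : B ∈ patterns) (k : ℕ) :
    μ {ω | (obsWord [H] ξ k ω).foldl (raceStep patterns 2) (.inr []) = .inl B} ≤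
      winChance B [H] / 6 := by
  have hcard : Fintype.card Coin = 2 := rfl
  calc μ {ω | (obsWord [H] ξ k ω).foldl (raceStep patterns 2) (.inr []) = .inl B}
      = μ {ω | (fun i : Fin k => ξ i ω) ∈ Finset.univ.filter fun w : Fin k → Coin =>
          (List.ofFn w).foldl (raceStep patterns 2) (.inr [H]) = .inl B} := by
        congr 1; ext ω
        simp only [Set.mem_ofPred_eq, Finset.mem_filter, Finset.mem_univ, true_and]
        rfl
    _ ≤ _ := measure_tosses_mem_le hindep (fun n c => by rw [hdist, hcard]; simp) k _
    _ ≤ winChance B [H] / 6 := by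
        rw [hcard, ENNReal.div_le_iff (by positivity) (by simp), mul_comm, ← mul_div_assoc,
          ENNReal.le_div_iff_mul_le (by simp) (by simp)]
        exact_mod_cast card_filter_foldl_raceStep_eq_inl_mul_six_le hB k

theorem measure_min_hitTime_eq_le [IsProbabilityMeasure μ] (hmeas : ∀ n, Measurable (ξ n))
    (hindep : iIndepFun ξ μ) (hdist : ∀ n c, μ {ω | ξ n ω = c} = 1 / 2)
    (hfin : μ {ω | ∀ B ∈ patterns, ∃ k, B <:+: obsWord [H] ξ k ω} = 1)
    {B : List Coin} (hB : B ∈ patterns) :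
    μ {ω | min (min (hitTime [H] [T, H, H] ξ ω) (hitTime [H] [H, T, H] ξ ω))
      (hitTime [H] [H, H, T] ξ ω) = hitTime [H] B ξ ω} ≤ winChance B [H] / 6 := by
  refine (measure_mono fun ω (h : _ = _) => ?_).trans
    ((measure_first_le_iSup hmeas (by decide) (by decide) hB hfin).trans
      (iSup_le (measure_foldl_obsWord_eq_inl_le hindep hdist hB)))
  simp only [patterns, List.mem_cons, List.not_mem_nil, or_false] at hB
  rcases hB with rfl | rfl | rfl <;> simp [patterns] <;> omega

end Coin

theorem one_le_measure_min_eq_add {Ω : Type*} [MeasurableSpace Ω] (μ : Measure Ω)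
    [IsProbabilityMeasure μ] (f g h : Ω → ℕ) :
    1 ≤ μ {ω | min (min (f ω) (g ω)) (h ω) = f ω} + μ {ω | min (min (f ω) (g ω)) (h ω) = g ω} +
      μ {ω | min (min (f ω) (g ω)) (h ω) = h ω} :=
  calc 1 = μ ({ω | min (min (f ω) (g ω)) (h ω) = f ω} ∪
        {ω | min (min (f ω) (g ω)) (h ω) = g ω} ∪ {ω | min (min (f ω) (g ω)) (h ω) = h ω}) := by
        rw [← measure_univ (μ := μ)]; congr 1; ext ω; simp; omega
    _ ≤ _ := (measure_union_le _ _).trans (add_le_add_left (measure_union_le _ _) _)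

/-- For i.i.d. fair coin tosses, the patterns `B₁ = THH`, `B₂ = HTH`, `B₃ = HHT`, and the
initial pattern `A = H`: `Pr(τ = τ₁) = 1/6`, `Pr(τ = τ₂) = 1/3`, `Pr(τ = τ₃) = 1/2`. -/
theorem coin_example_initial_H
    {Ω : Type*} [MeasurableSpace Ω] (μ : Measure Ω) [IsProbabilityMeasure μ]
    (ξ : ℕ → Ω → Coin) (hmeas : ∀ n, Measurable (ξ n))
    (hindep : iIndepFun ξ μ)
    (hdist : ∀ n c, μ {ω | ξ n ω = c} = 1 / 2)
    (A : List Coin) (hA : A = [Coin.H])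
    (τ₁ τ₂ τ₃ τ : Ω → ℕ)
    (hτ₁ : τ₁ = hitTime A ([Coin.T, Coin.H, Coin.H]) ξ)
    (hτ₂ : τ₂ = hitTime A ([Coin.H, Coin.T, Coin.H]) ξ)
    (hτ₃ : τ₃ = hitTime A ([Coin.H, Coin.H, Coin.T]) ξ)
    (hτ : τ = fun ω => min (min (τ₁ ω) (τ₂ ω)) (τ₃ ω))
    (hfin : μ {ω | (∃ k, [Coin.T, Coin.H, Coin.H] <:+: obsWord A ξ k ω) ∧
        (∃ k, [Coin.H, Coin.T, Coin.H] <:+: obsWord A ξ k ω) ∧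
        (∃ k, [Coin.H, Coin.H, Coin.T] <:+: obsWord A ξ k ω)} = 1) :
    μ {ω | τ ω = τ₁ ω} = 1 / 6 ∧ μ {ω | τ ω = τ₂ ω} = 1 / 3 ∧
      μ {ω | τ ω = τ₃ ω} = 1 / 2 := by
  subst hA hτ₁ hτ₂ hτ₃ hτ
  have hfin' : μ {ω | ∀ B ∈ Coin.patterns, ∃ k, B <:+: obsWord [Coin.H] ξ k ω} = 1 := by
    simpa [Coin.patterns] using hfin
  have h₁ := Coin.measure_min_hitTime_eq_le hmeas hindep hdist hfin' (B := [.T, .H, .H]) (by decide)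
  have h₂ := Coin.measure_min_hitTime_eq_le hmeas hindep hdist hfin' (B := [.H, .T, .H]) (by decide)
  have h₃ := Coin.measure_min_hitTime_eq_le hmeas hindep hdist hfin' (B := [.H, .H, .T]) (by decide)
  simp only [Coin.winChance, Nat.cast_one, Nat.cast_ofNat] at h₁ h₂ h₃
  have hsum : (1 : ℝ≥0∞) / 6 + 2 / 6 + 3 / 6 = 1 := by
    rw [ENNReal.div_add_div_same, ENNReal.div_add_div_same, ENNReal.div_eq_one_iff] <;> norm_num
  obtain ⟨e₁, e₂, e₃⟩ := ENNReal.eq_of_le_of_add_add_le h₁ h₂ h₃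
    (hsum.trans_le (one_le_measure_min_eq_add μ _ _ _)) (by rw [hsum]; exact ENNReal.one_ne_top)
  refine ⟨e₁, e₂.trans ?_, e₃.trans ?_⟩ <;> rw [ENNReal.div_eq_div_iff] <;> norm_num
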